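/- arXiv:2601.23125 — 3 statements merged into one kernel-verified Lean document; each statement's English description precedes it below -/
import Mathlib

section
/- Let f = Σ_γ c_γ x^γ ∈ ℂ[x₁,…,xₙ] be a nonzero polynomial. For every γ ∈ Supp(f) there exists a finitely supported function a : ℕⁿ → ℂ with support contained in {δ ∈ Supp(f) : γ ≤ δ} and with a(γ) = 1, such that Σ_δ a(δ) · x^{δ−γ} · (∂^δ f) = c_γ · γ! (as a constant polynomial). In other words, the operator P_γ = Σ_δ a(δ) x^{δ−γ} ∂^δ satisfies P_γ • f = c_γ γ!. -/
open MvPolynomial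
open scoped Classical Pointwise

noncomputable def evalR {n : ℕ} (f : MvPolynomial (Fin n) ℂ) (x : Fin n → ℝ) : ℂ :=
  MvPolynomial.eval (fun i => (x i : ℂ)) f

noncomputable def pd {n : ℕ} (i : Fin n) (g : (Fin n → ℝ) → ℂ) : (Fin n → ℝ) → ℂ :=
  fun x => fderiv ℝ g x (Pi.single i 1)

noncomputable def pdIter {n : ℕ} (β : Fin n → ℕ) (g : (Fin n → ℝ) → ℂ) : (Fin n → ℝ) → ℂ :=
  ((List.ofFn (fun i : Fin n => (pd i)^[β i])).foldr (· ∘ ·) id) g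

noncomputable def pdPoly {n : ℕ} (β : Fin n → ℕ) (f : MvPolynomial (Fin n) ℂ) :
    MvPolynomial (Fin n) ℂ :=
  ((List.ofFn (fun i : Fin n => (fun h => MvPolynomial.pderiv i h)^[β i])).foldr (· ∘ ·) id) f

noncomputable def newton {n : ℕ} (f : MvPolynomial (Fin n) ℂ) : Set (Fin n → ℝ) :=
  convexHull ℝ ((fun γ : Fin n →₀ ℕ => fun i => (γ i : ℝ)) '' ↑f.support)

noncomputable def ordW {n : ℕ} (f : MvPolynomial (Fin n) ℂ) (ω : Fin n → ℝ) : ℝ :=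
  sInf ((fun γ : Fin n →₀ ℕ => ∑ i, (γ i : ℝ) * ω i) '' ↑f.support)

noncomputable def initForm {n : ℕ} (ω : Fin n → ℝ) (f : MvPolynomial (Fin n) ℂ) :
    MvPolynomial (Fin n) ℂ :=
  ∑ γ ∈ f.support.filter (fun γ => ∑ i, (γ i : ℝ) * ω i = ordW f ω),
    MvPolynomial.monomial γ (MvPolynomial.coeff γ f)

/-!
The operator `x^(δ-γ) ∂^δ` sends `x^ε` to `ε^(δ) x^(ε-γ)`, where the multi-index falling
factorial `ε^(δ) = ∏ᵢ εᵢ (εᵢ - 1) ⋯ (εᵢ - δᵢ + 1)` vanishes unless `δ ≤ ε` and `ε^(ε) = ε!`.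
So the coefficient of `x^(ε-γ)` in `P_γ f` is `c_ε ∑_δ a(δ) ε^(δ)`, and asking it to vanish for
every `ε ∈ Supp f` other than `γ` is a unitriangular linear system (for the order `≤` on
multi-indices) in the unknowns `a(δ)`, `δ ∈ Supp f`, `γ ≤ δ`. It is solved with `a(γ) = 1` by
peeling off maximal elements; what survives is the constant `c_γ γ! a(γ)`.
-/

open Finset

theorem exists_unitriangular_solution {α K : Type*} [PartialOrder α] [Field K]
    (w : α → α → K) (γ : α) (T : Finset α) (hdiag : ∀ ε ∈ T, ε ≠ γ → w ε ε ≠ 0)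
    (htri : ∀ ε ∈ T, ∀ δ ∈ T, w ε δ ≠ 0 → δ ≤ ε) :
    ∃ a : α → K, a γ = 1 ∧ ∀ ε ∈ T, ε ≠ γ → ∑ δ ∈ T, a δ * w ε δ = 0 := by
  induction T using Finset.strongInduction with
  | H T ih =>
  rcases T.eq_empty_or_nonempty with rfl | hT
  · exact ⟨fun _ => 1, rfl, by simp⟩
  obtain ⟨ε₀, hε₀T, hmax⟩ := T.exists_maximal hT
  obtain ⟨a, haγ, ha⟩ := ih (T.erase ε₀) (erase_ssubset hε₀T)
    (fun ε hε => hdiag ε (mem_of_mem_erase hε))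
    (fun ε hε δ hδ => htri ε (mem_of_mem_erase hε) δ (mem_of_mem_erase hδ))
  -- `ε₀` is maximal, so `a ε₀` enters only the equation at `ε₀`, where it is solved for
  let v := if ε₀ = γ then 1 else -(w ε₀ ε₀)⁻¹ * ∑ δ ∈ T.erase ε₀, a δ * w ε₀ δ
  refine ⟨Function.update a ε₀ v, ?_, fun ε hε hne => ?_⟩
  · by_cases h : ε₀ = γ
    · subst h; simp [v]
    · rwa [Function.update_of_ne (Ne.symm h)]
  rw [← add_sum_erase T _ hε₀T, Function.update_self,
    sum_congr rfl fun δ hδ => by rw [Function.update_of_ne (ne_of_mem_erase hδ)]]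
  by_cases hεε₀ : ε = ε₀
  · subst hεε₀
    simp only [v, if_neg hne]
    field_simp [hdiag ε hε hne]
    ring
  · have hw : w ε ε₀ = 0 := by
      by_contra h
      exact hεε₀ (le_antisymm (hmax hε (htri ε hε ε₀ hε₀T h)) (htri ε hε ε₀ hε₀T h))
    rw [hw, mul_zero, zero_add, ha ε (mem_erase.2 ⟨hεε₀, hε⟩) hne]

theorem Module.End.foldr_comp_map_coe_apply {R M : Type*} [Semiring R] [AddCommMonoid M]
    [Module R M] (l : List (Module.End R M)) (x : M) :
    (l.map fun g : Module.End R M => (g : M → M)).foldr (· ∘ ·) id x = l.prod x := by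
  induction l with
  | nil => rfl
  | cons g l ih => simp [ih, Module.End.mul_apply]

section

variable {σ R : Type*} [CommSemiring R]

theorem MvPolynomial.pderiv_pow_monomial (i : σ) (k : ℕ) (s : σ →₀ ℕ) (c : R) :
    ((pderiv i).toLinearMap ^ k) (monomial s c)
      = monomial (s - Finsupp.single i k) (c * (s i).descFactorial k) := by
  induction k with
  | zero => simp
  | succ k ih =>
    rw [pow_succ', Module.End.mul_apply, ih]
    simp only [Derivation.coeFn_coe, pderiv_monomial, tsub_tsub, ← Finsupp.single_add,
      Finsupp.coe_tsub, Pi.sub_apply, Finsupp.single_eq_same, Nat.descFactorial_succ, Nat.cast_mul]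
    ring_nf

theorem MvPolynomial.list_prod_pderiv_pow_monomial [DecidableEq σ] (β : σ → ℕ) {l : List σ}
    (hl : l.Nodup) (s : σ →₀ ℕ) (c : R) :
    (l.map fun i => (pderiv i).toLinearMap ^ β i).prod (monomial s c)
      = monomial (s - ∑ i ∈ l.toFinset, Finsupp.single i (β i))
          (c * ∏ i ∈ l.toFinset, ((s i).descFactorial (β i) : R)) := by
  induction l with
  | nil => simp
  | cons i t ih =>
    obtain ⟨hit, ht⟩ := List.nodup_cons.mp hl
    have hiF : i ∉ t.toFinset := by simpa using hit
    have hs : (s - ∑ j ∈ t.toFinset, Finsupp.single j (β j)) i = s i := by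
      simp [Finsupp.single_apply, hit]
    rw [List.map_cons, List.prod_cons, Module.End.mul_apply, ih ht, pderiv_pow_monomial, hs,
      List.toFinset_cons, sum_insert hiF, prod_insert hiF, tsub_tsub, add_comm]
    ring_nf

end

theorem pdPoly_eq_list_prod {n : ℕ} (β : Fin n → ℕ) (f : MvPolynomial (Fin n) ℂ) :
    pdPoly β f = (List.ofFn fun i => (pderiv i).toLinearMap ^ β i).prod f := by
  rw [pdPoly, ← Module.End.foldr_comp_map_coe_apply, List.map_ofFn]
  simp only [Function.comp_def, Module.End.coe_pow]
  rfl

def multiDescFactorial {σ : Type*} [Fintype σ] (ε δ : σ →₀ ℕ) : ℕ :=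
  ∏ i, (ε i).descFactorial (δ i)

section

variable {σ : Type*} [Fintype σ] {ε δ : σ →₀ ℕ}

theorem multiDescFactorial_self (ε : σ →₀ ℕ) :
    multiDescFactorial ε ε = ∏ i, (ε i).factorial := by
  simp only [multiDescFactorial, Nat.descFactorial_self]

theorem multiDescFactorial_self_ne_zero (ε : σ →₀ ℕ) : multiDescFactorial ε ε ≠ 0 := by
  rw [multiDescFactorial_self]
  exact prod_ne_zero_iff.2 fun i _ => Nat.factorial_ne_zero _

theorem multiDescFactorial_eq_zero_of_not_le (h : ¬δ ≤ ε) : multiDescFactorial ε δ = 0 := by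
  obtain ⟨i, hi⟩ := not_forall.1 h
  exact prod_eq_zero (mem_univ i) (Nat.descFactorial_eq_zero_iff_lt.2 (not_le.1 hi))

end

theorem pdPoly_monomial {n : ℕ} (δ s : Fin n →₀ ℕ) (c : ℂ) :
    pdPoly δ (monomial s c) = monomial (s - δ) (c * multiDescFactorial s δ) := by
  rw [pdPoly_eq_list_prod, List.ofFn_eq_map,
    list_prod_pderiv_pow_monomial _ (List.nodup_finRange n), List.toFinset_finRange,
    Finsupp.univ_sum_single, multiDescFactorial, Nat.cast_prod]

theorem pdPoly_eq_sum {n : ℕ} (δ : Fin n →₀ ℕ) (f : MvPolynomial (Fin n) ℂ) :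
    pdPoly δ f = ∑ ε ∈ f.support, monomial (ε - δ) (coeff ε f * multiDescFactorial ε δ) := by
  conv_lhs => rw [f.as_sum, pdPoly_eq_list_prod, map_sum]
  simp_rw [← pdPoly_eq_list_prod, pdPoly_monomial]

theorem monomial_sub_mul_pdPoly {n : ℕ} {γ δ : Fin n →₀ ℕ} (hγδ : γ ≤ δ) (c : ℂ)
    (f : MvPolynomial (Fin n) ℂ) :
    monomial (δ - γ) c * pdPoly δ f
      = ∑ ε ∈ f.support, monomial (ε - γ) (c * (coeff ε f * multiDescFactorial ε δ)) := by
  rw [pdPoly_eq_sum, mul_sum]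
  refine sum_congr rfl fun ε _ => ?_
  rw [monomial_mul]
  by_cases hδε : δ ≤ ε
  · rw [add_comm, tsub_add_tsub_cancel hδε hγδ]
  · simp [multiDescFactorial_eq_zero_of_not_le hδε]

theorem sum_monomial_sub_mul_pdPoly {n : ℕ} {γ : Fin n →₀ ℕ} {S : Finset (Fin n →₀ ℕ)}
    (hS : ∀ δ ∈ S, γ ≤ δ) (a : (Fin n →₀ ℕ) → ℂ) (f : MvPolynomial (Fin n) ℂ) :
    ∑ δ ∈ S, monomial (δ - γ) (a δ) * pdPoly δ f
      = ∑ ε ∈ f.support,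
          monomial (ε - γ) (coeff ε f * ∑ δ ∈ S, a δ * multiDescFactorial ε δ) := by
  rw [sum_congr rfl fun δ hδ => monomial_sub_mul_pdPoly (hS δ hδ) _ f, sum_comm]
  refine sum_congr rfl fun ε _ => ?_
  rw [mul_sum, ← map_sum]
  congr 1
  exact sum_congr rfl fun δ _ => by ring

theorem stmt2_general (n : ℕ) (f : MvPolynomial (Fin n) ℂ) (γ : Fin n →₀ ℕ)
    (hγ : γ ∈ f.support) :
    ∃ a : (Fin n →₀ ℕ) → ℂ, a γ = 1 ∧
      ∑ δ ∈ f.support.filter (fun δ => γ ≤ δ),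
          MvPolynomial.monomial (δ - γ) (a δ) * pdPoly (⇑δ) f
        = MvPolynomial.C (MvPolynomial.coeff γ f * ((∏ i, (γ i).factorial : ℕ) : ℂ)) := by
  set S := f.support.filter (fun δ => γ ≤ δ)
  have hS : ∀ δ ∈ S, γ ≤ δ := fun δ hδ => (mem_filter.1 hδ).2
  have hw : ∀ ε δ : Fin n →₀ ℕ, ¬δ ≤ ε → (multiDescFactorial ε δ : ℂ) = 0 := fun ε δ h => by
    rw [multiDescFactorial_eq_zero_of_not_le h, Nat.cast_zero]
  obtain ⟨a, haγ, ha⟩ := exists_unitriangular_solution (fun ε δ => (multiDescFactorial ε δ : ℂ))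
    γ S (fun ε _ _ => Nat.cast_ne_zero.2 (multiDescFactorial_self_ne_zero ε))
    (fun ε _ δ _ h => not_not.1 (mt (hw ε δ) h))
  refine ⟨a, haγ, ?_⟩
  have hoff : ∀ ε ∈ f.support, ε ≠ γ → ∑ δ ∈ S, a δ * multiDescFactorial ε δ = 0 := by
    intro ε hε hne
    by_cases hγε : γ ≤ ε
    · exact ha ε (mem_filter.2 ⟨hε, hγε⟩) hne
    · exact sum_eq_zero fun δ hδ => by rw [hw ε δ fun h => hγε ((hS δ hδ).trans h), mul_zero]
  have hdiag : ∑ δ ∈ S, a δ * multiDescFactorial γ δ = multiDescFactorial γ γ := by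
    have hγS : γ ∈ S := mem_filter.2 ⟨hγ, le_rfl⟩
    refine (sum_eq_single γ (fun δ hδ hne => ?_) fun h => absurd hγS h).trans (by rw [haγ, one_mul])
    rw [hw γ δ fun h => hne (h.antisymm (hS δ hδ)), mul_zero]
  rw [sum_monomial_sub_mul_pdPoly hS, sum_eq_single γ
      (fun ε hε hne => by rw [hoff ε hε hne, mul_zero, map_zero]) (fun h => absurd hγ h),
    hdiag, multiDescFactorial_self, tsub_self, monomial_zero']

/-- for every `γ ∈ Supp(f)` there is an operator
`P_γ = Σ_δ a(δ) x^{δ−γ} ∂^δ`, with `a` supported on `{δ ∈ Supp(f) : γ ≤ δ}` and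
`a(γ) = 1`, such that `P_γ • f = c_γ γ!`. -/
theorem stmt2 (n : ℕ) (f : MvPolynomial (Fin n) ℂ) (hf : f ≠ 0) (γ : Fin n →₀ ℕ)
    (hγ : γ ∈ f.support) :
    ∃ a : (Fin n →₀ ℕ) → ℂ, a γ = 1 ∧
      ∑ δ ∈ f.support.filter (fun δ => γ ≤ δ),
          MvPolynomial.monomial (δ - γ) (a δ) * pdPoly (⇑δ) f
        = MvPolynomial.C (MvPolynomial.coeff γ f * ((∏ i, (γ i).factorial : ℕ) : ℂ)) :=
  stmt2_general n f γ hγ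
end

section
/- Let f ∈ ℂ[x₁,…,xₙ] be a nonzero polynomial, ℓ ∈ ℕ, ω ∈ ℝⁿ∖{0}, and 1 ≤ i ≤ n. Set λ_i = max{γ_i : γ ∈ Supp(f), ⟨γ,ω⟩ = ord_f(ω)}. Then there exists a polynomial-coefficient differential operator Q = ∂_i^{ℓλ_i+1} + Σ_{(α,β)∈A} c_{αβ} x^α ∂^β, with A finite and every (α,β) ∈ A satisfying ⟨ω,β⟩ − ⟨ω,α⟩ < (ℓλ_i+1)·ω_i, such that Q • f^ℓ = 0 as a polynomial identity (i.e. ∂_i^{ℓλ_i+1}(f^ℓ) + Σ_{(α,β)∈A} c_{αβ} x^α ∂^β(f^ℓ) = 0). In other words, ∂_i^{ℓλ_i+1} is the (−ω,ω)-initial form of an operator annihilating f^ℓ. -/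
open MvPolynomial
open scoped Classical Pointwise

/-!
Write `g = f ^ ℓ` and `L = ℓλᵢ + 1`. The ω-face of a product is the sum of the faces (compare the
lexicographically largest monomials on the two faces), so every monomial on the face of `g` has
`i`-th exponent at most `ℓλᵢ`; hence every monomial `x^γ` of `∂ᵢ^L g` has
`⟨ω, γ⟩ > ord_g(ω) - L ωᵢ`. Every such monomial is a combination of the `x^α ∂^β g` with
`⟨ω, β⟩ - ⟨ω, α⟩ < L ωᵢ`: for `β₀` maximal on the face of `g`, `∂^β₀ g` is a nonzero constant
plus terms of positive weight, which rewrites `x^γ` modulo monomials of strictly larger weight,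
and once the weight is large enough `x^γ` is a multiple of the constant `∂^β₁ g`, `β₁` maximal
in the support of `g`.
-/

open Finsupp (weight)

section Face

variable {n : ℕ}

lemma weight_eq_sum_mul (ω : Fin n → ℝ) (γ : Fin n →₀ ℕ) :
    weight ω γ = ∑ k, (γ k : ℝ) * ω k := by
  simp [Finsupp.weight_eq_sum, nsmul_eq_mul]

lemma ordW_eq_sInf_weight (f : MvPolynomial (Fin n) ℂ) (ω : Fin n → ℝ) :
    ordW f ω = sInf (weight ω '' (f.support : Set (Fin n →₀ ℕ))) := by
  simp only [ordW, weight_eq_sum_mul]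

lemma ordW_le_weight {f : MvPolynomial (Fin n) ℂ} (ω : Fin n → ℝ) {γ : Fin n →₀ ℕ}
    (hγ : γ ∈ f.support) : ordW f ω ≤ weight ω γ := by
  rw [ordW_eq_sInf_weight]
  exact csInf_le (f.support.finite_toSet.image _).bddBelow (Set.mem_image_of_mem _ hγ)

noncomputable def face (ω : Fin n → ℝ) (f : MvPolynomial (Fin n) ℂ) : Finset (Fin n →₀ ℕ) :=
  f.support.filter fun γ => ∑ k, (γ k : ℝ) * ω k = ordW f ω

lemma mem_face {ω : Fin n → ℝ} {f : MvPolynomial (Fin n) ℂ} {γ : Fin n →₀ ℕ} :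
    γ ∈ face ω f ↔ γ ∈ f.support ∧ weight ω γ = ordW f ω := by
  simp [face, weight_eq_sum_mul]

lemma face_nonempty {f : MvPolynomial (Fin n) ℂ} (hf : f ≠ 0) (ω : Fin n → ℝ) :
    (face ω f).Nonempty := by
  have h := ((Finset.coe_nonempty.2 (support_nonempty.2 hf)).image (weight ω)).csInf_mem
    (f.support.finite_toSet.image _)
  rw [← ordW_eq_sInf_weight] at h
  obtain ⟨γ, hγ, hw⟩ := h
  exact ⟨γ, mem_face.2 ⟨hγ, hw⟩⟩

lemma mem_face_of_weight_add_le {ω : Fin n → ℝ} {f h : MvPolynomial (Fin n) ℂ}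
    {a b : Fin n →₀ ℕ} (ha : a ∈ f.support) (hb : b ∈ h.support)
    (hab : weight ω (a + b) ≤ ordW f ω + ordW h ω) : a ∈ face ω f ∧ b ∈ face ω h := by
  have hfa := ordW_le_weight ω ha
  have hhb := ordW_le_weight ω hb
  rw [map_add] at hab
  exact ⟨mem_face.2 ⟨ha, by linarith⟩, mem_face.2 ⟨hb, by linarith⟩⟩

lemma coeff_add_mul_of_lexMax_face {ω : Fin n → ℝ} {f h : MvPolynomial (Fin n) ℂ}
    {u v : Fin n →₀ ℕ} (hu : u ∈ face ω f) (hu_max : ∀ a ∈ face ω f, toLex a ≤ toLex u)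
    (hv : v ∈ face ω h) (hv_max : ∀ b ∈ face ω h, toLex b ≤ toLex v) :
    coeff (u + v) (f * h) = coeff u f * coeff v h := by
  rw [coeff_mul, Finset.sum_eq_single_of_mem (u, v) (Finset.HasAntidiagonal.mem_antidiagonal.2 rfl)]
  rintro ⟨a, b⟩ hab hne
  rw [Finset.HasAntidiagonal.mem_antidiagonal] at hab
  by_contra hprod
  obtain ⟨ha, hb⟩ := mem_face_of_weight_add_le
    (mem_support_iff.2 (left_ne_zero_of_mul hprod)) (mem_support_iff.2 (right_ne_zero_of_mul hprod))
    (by rw [hab, map_add, (mem_face.1 hu).2, (mem_face.1 hv).2])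
  have hlex := (add_eq_add_iff_eq_and_eq (hu_max a ha) (hv_max b hb)).1
    (by rw [← toLex_add, ← toLex_add, hab])
  exact hne (Prod.ext (toLex.injective hlex.1) (toLex.injective hlex.2))

lemma ordW_mul {f h : MvPolynomial (Fin n) ℂ} (hf : f ≠ 0) (hh : h ≠ 0) (ω : Fin n → ℝ) :
    ordW (f * h) ω = ordW f ω + ordW h ω := by
  obtain ⟨u, hu, hu_max⟩ := (face ω f).exists_max_image toLex (face_nonempty hf ω)
  obtain ⟨v, hv, hv_max⟩ := (face ω h).exists_max_image toLex (face_nonempty hh ω)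
  apply le_antisymm
  · have huv : u + v ∈ (f * h).support := by
      rw [mem_support_iff, coeff_add_mul_of_lexMax_face hu hu_max hv hv_max]
      exact mul_ne_zero (mem_support_iff.1 (mem_face.1 hu).1) (mem_support_iff.1 (mem_face.1 hv).1)
    calc ordW (f * h) ω ≤ weight ω (u + v) := ordW_le_weight ω huv
      _ = ordW f ω + ordW h ω := by rw [map_add, (mem_face.1 hu).2, (mem_face.1 hv).2]
  · obtain ⟨δ, hδ⟩ := face_nonempty (mul_ne_zero hf hh) ω
    obtain ⟨hδS, hδw⟩ := mem_face.1 hδ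
    obtain ⟨a, ha, b, hb, rfl⟩ := Finset.mem_add.1 (support_mul f h hδS)
    rw [← hδw, map_add]
    exact add_le_add (ordW_le_weight ω ha) (ordW_le_weight ω hb)

lemma exists_add_eq_of_mem_face_mul {ω : Fin n → ℝ} {f h : MvPolynomial (Fin n) ℂ}
    (hf : f ≠ 0) (hh : h ≠ 0) {δ : Fin n →₀ ℕ} (hδ : δ ∈ face ω (f * h)) :
    ∃ a ∈ face ω f, ∃ b ∈ face ω h, a + b = δ := by
  obtain ⟨hδS, hδw⟩ := mem_face.1 hδ
  obtain ⟨a, ha, b, hb, rfl⟩ := Finset.mem_add.1 (support_mul f h hδS)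
  obtain ⟨haF, hbF⟩ := mem_face_of_weight_add_le ha hb (by rw [hδw, ordW_mul hf hh])
  exact ⟨a, haF, b, hbF, rfl⟩

lemma apply_le_of_mem_face_pow {ω : Fin n → ℝ} {f : MvPolynomial (Fin n) ℂ} (hf : f ≠ 0)
    (i : Fin n) : ∀ (ℓ : ℕ), ∀ δ ∈ face ω (f ^ ℓ), δ i ≤ ℓ * (face ω f).sup (· i)
  | 0, δ, hδ => by simp_all [face]
  | ℓ + 1, δ, hδ => by
    rw [pow_succ] at hδ
    obtain ⟨a, ha, b, hb, rfl⟩ := exists_add_eq_of_mem_face_mul (pow_ne_zero ℓ hf) hf hδ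
    have hai := apply_le_of_mem_face_pow hf i ℓ a ha
    have hbi : b i ≤ (face ω f).sup (· i) := Finset.le_sup (f := (· i)) hb
    rw [Finsupp.add_apply, add_mul, one_mul]
    omega

end Face

section Derivative

lemma coeff_iterate_pderiv_ne_zero_iff {σ R : Type*} [CommSemiring R] [NoZeroDivisors R]
    [CharZero R] (i : σ) (b : ℕ) (γ : σ →₀ ℕ) (p : MvPolynomial σ R) :
    coeff γ ((fun q => pderiv i q)^[b] p) ≠ 0 ↔ coeff (γ + Finsupp.single i b) p ≠ 0 := by
  induction b generalizing γ with
  | zero => simp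
  | succ b ih =>
    rw [Function.iterate_succ_apply', coeff_pderiv, mul_ne_zero_iff, ih, add_assoc,
      ← Finsupp.single_add, add_comm 1 b]
    simp [Nat.cast_add_one_ne_zero]

lemma coeff_foldr_iterate_pderiv_ne_zero_iff {σ R : Type*} [CommSemiring R] [NoZeroDivisors R]
    [CharZero R] (β : σ → ℕ) (l : List σ) (γ : σ →₀ ℕ) (p : MvPolynomial σ R) :
    coeff γ ((l.map fun j => (fun q => pderiv j q)^[β j]).foldr (· ∘ ·) id p) ≠ 0 ↔
      coeff (γ + (l.map fun j => Finsupp.single j (β j)).sum) p ≠ 0 := by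
  induction l generalizing γ with
  | nil => simp
  | cons j l ih =>
    simp only [List.map_cons, List.foldr_cons, Function.comp_apply, List.sum_cons]
    rw [coeff_iterate_pderiv_ne_zero_iff, ih, add_assoc]

variable {n : ℕ}

lemma mem_support_pdPoly_iff (β γ : Fin n →₀ ℕ) (p : MvPolynomial (Fin n) ℂ) :
    γ ∈ (pdPoly β p).support ↔ γ + β ∈ p.support := by
  rw [mem_support_iff, mem_support_iff, pdPoly, List.ofFn_eq_map,
    coeff_foldr_iterate_pderiv_ne_zero_iff, ← Fin.sum_univ_def, Finsupp.univ_sum_single]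

lemma zero_mem_support_pdPoly {β : Fin n →₀ ℕ} {p : MvPolynomial (Fin n) ℂ}
    (hβ : β ∈ p.support) : 0 ∈ (pdPoly β p).support := by
  rwa [mem_support_pdPoly_iff, zero_add]

lemma pdPoly_eq_C_of_maximal {β : Fin n →₀ ℕ} {p : MvPolynomial (Fin n) ℂ}
    (hβ : Maximal (· ∈ p.support) β) : pdPoly β p = C (coeff 0 (pdPoly β p)) := by
  ext ε
  rw [coeff_C]
  split_ifs with h
  · rw [h]
  · by_contra hε
    exact hβ.not_gt ((mem_support_pdPoly_iff β ε p).1 (mem_support_iff.2 hε))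
      (lt_add_of_pos_left β (pos_iff_ne_zero.2 (Ne.symm h)))

lemma weight_pos_of_mem_support_pdPoly {ω : Fin n → ℝ} {β ε : Fin n →₀ ℕ}
    {p : MvPolynomial (Fin n) ℂ} (hβ : Maximal (· ∈ face ω p) β)
    (hε : ε ∈ (pdPoly β p).support) (hε0 : ε ≠ 0) : 0 < weight ω ε := by
  have hS := (mem_support_pdPoly_iff β ε p).1 hε
  have hne : weight ω (ε + β) ≠ ordW p ω := fun h =>
    hβ.not_gt (mem_face.2 ⟨hS, h⟩) (lt_add_of_pos_left β (pos_iff_ne_zero.2 hε0))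
  have hlt := lt_of_le_of_ne (ordW_le_weight ω hS) (Ne.symm hne)
  rw [map_add, ← (mem_face.1 hβ.prop).2] at hlt
  linarith

end Derivative

lemma exists_pos_le_of_forall_pos {ι : Type*} (s : Finset ι) (F : ι → ℝ)
    (h : ∀ x ∈ s, 0 < F x) : ∃ ε > 0, ∀ x ∈ s, ε ≤ F x := by
  refine ⟨(insert 1 (s.image F)).min' (Finset.insert_nonempty _ _), ?_,
    fun x hx => Finset.min'_le _ _ (Finset.mem_insert_of_mem (Finset.mem_image_of_mem F hx))⟩
  rw [gt_iff_lt, Finset.lt_min'_iff]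
  simpa using h

lemma mem_of_forall_monomial_mem {σ R : Type*} [CommSemiring R]
    (M : Submodule R (MvPolynomial σ R)) {p : MvPolynomial σ R}
    (h : ∀ γ ∈ p.support, monomial γ (coeff γ p) ∈ M) : p ∈ M := by
  rw [p.as_sum]
  exact M.sum_mem h

lemma monomial_mem_of_weight_ascent {σ R : Type*} [CommRing R]
    {M : Submodule R (MvPolynomial σ R)} {w : σ → ℝ} {a B ε : ℝ} (hε : 0 < ε)
    (hbig : ∀ γ z, B < weight w γ → monomial γ z ∈ M)
    (hstep : ∀ γ z, a < weight w γ →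
      ∃ q, monomial γ z - q ∈ M ∧ ∀ δ ∈ q.support, weight w γ + ε ≤ weight w δ)
    {γ : σ →₀ ℕ} (hγ : a < weight w γ) (z : R) : monomial γ z ∈ M := by
  obtain ⟨N, hN⟩ := exists_nat_gt ((B - weight w γ) / ε)
  rw [div_lt_iff₀ hε] at hN
  induction N generalizing γ z with
  | zero => exact hbig γ z (by simp at hN; linarith)
  | succ N ih =>
    obtain ⟨q, hq, hq_weight⟩ := hstep γ z hγ
    rw [← sub_add_cancel (monomial γ z) q]
    refine M.add_mem hq (mem_of_forall_monomial_mem M fun δ hδ => ih ?_ _ ?_)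
    · linarith [hq_weight δ hδ]
    · push_cast at hN
      linarith [hq_weight δ hδ]

section OperatorSpan

variable {n : ℕ}

noncomputable def opSpan (g : MvPolynomial (Fin n) ℂ) (S : Set ((Fin n →₀ ℕ) × (Fin n →₀ ℕ))) :
    Submodule ℂ (MvPolynomial (Fin n) ℂ) :=
  Submodule.span ℂ ((fun p => monomial p.1 1 * pdPoly p.2 g) '' S)

variable {g : MvPolynomial (Fin n) ℂ} {S : Set ((Fin n →₀ ℕ) × (Fin n →₀ ℕ))}

lemma monomial_mul_pdPoly_mem_opSpan {α β : Fin n →₀ ℕ} (h : (α, β) ∈ S) (z : ℂ) :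
    monomial α z * pdPoly β g ∈ opSpan g S := by
  have : monomial α z * pdPoly β g = z • (monomial α 1 * pdPoly β g) := by
    rw [← smul_mul_assoc, smul_monomial, smul_eq_mul, mul_one]
  rw [this]
  exact Submodule.smul_mem _ _ (Submodule.subset_span ⟨(α, β), h, rfl⟩)

lemma exists_sum_eq_of_mem_opSpan {P : MvPolynomial (Fin n) ℂ} (hP : P ∈ opSpan g S) :
    ∃ (A : Finset ((Fin n →₀ ℕ) × (Fin n →₀ ℕ))) (c : (Fin n →₀ ℕ) × (Fin n →₀ ℕ) → ℂ),
      (∀ p ∈ A, p ∈ S) ∧ ∑ p ∈ A, monomial p.1 (c p) * pdPoly p.2 g = P := by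
  obtain ⟨l, hl, rfl⟩ := (Finsupp.mem_span_image_iff_linearCombination ℂ).1 hP
  refine ⟨l.support, l, fun p hp => (Finsupp.mem_supported _ _).1 hl hp, ?_⟩
  rw [Finsupp.linearCombination_apply, Finsupp.sum]
  refine Finset.sum_congr rfl fun p _ => ?_
  rw [← smul_mul_assoc, smul_monomial, smul_eq_mul, mul_one]

lemma monomial_mem_opSpan {ω : Fin n → ℝ} (hg : g ≠ 0) (c : ℝ) {γ : Fin n →₀ ℕ}
    (hγ : ordW g ω - c < weight ω γ) (z : ℂ) :
    monomial γ z ∈ opSpan g {p | weight ω p.2 - weight ω p.1 < c} := by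
  obtain ⟨β₁, hβ₁⟩ := g.support.exists_maximal (support_nonempty.2 hg)
  obtain ⟨β₀, hβ₀⟩ := (face ω g).exists_maximal (face_nonempty hg ω)
  have hβ₀S := mem_face.1 hβ₀.prop
  set D₀ := pdPoly β₀ g
  set C₀ := coeff 0 D₀
  set C₁ := coeff 0 (pdPoly β₁ g)
  have hC₀ : C₀ ≠ 0 := mem_support_iff.1 (zero_mem_support_pdPoly hβ₀S.1)
  have hC₁ : C₁ ≠ 0 := mem_support_iff.1 (zero_mem_support_pdPoly hβ₁.prop)
  obtain ⟨ε, hε, hε_le⟩ := exists_pos_le_of_forall_pos (D₀.support.erase 0) (weight ω)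
    fun δ hδ => weight_pos_of_mem_support_pdPoly hβ₀ (Finset.mem_of_mem_erase hδ)
      (Finset.ne_of_mem_erase hδ)
  refine monomial_mem_of_weight_ascent hε (B := weight ω β₁ - c) (fun γ z hγ => ?_)
    (fun γ z hγ => ?_) hγ z
  · have hz : monomial γ z = monomial γ (z / C₁) * pdPoly β₁ g := by
      rw [pdPoly_eq_C_of_maximal hβ₁, mul_comm, C_mul_monomial, mul_div_cancel₀ z hC₁]
    rw [hz]
    exact monomial_mul_pdPoly_mem_opSpan (show weight ω β₁ - weight ω γ < c by linarith) _
  · refine ⟨monomial γ (z / C₀) * (C C₀ - D₀), ?_, fun δ hδ => ?_⟩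
    · rw [mul_sub, mul_comm _ (C C₀), C_mul_monomial, mul_div_cancel₀ z hC₀, sub_sub_cancel]
      exact monomial_mul_pdPoly_mem_opSpan (show weight ω β₀ - weight ω γ < c by linarith) _
    · rw [mem_support_iff, coeff_monomial_mul'] at hδ
      have hγδ : γ ≤ δ := by
        by_contra h
        simp [h] at hδ
      rw [if_pos hγδ] at hδ
      have hcoeff := right_ne_zero_of_mul hδ
      have hne : δ - γ ≠ 0 := fun h => hcoeff (by simp [h, C₀])
      have hmem : δ - γ ∈ D₀.support.erase 0 := by
        refine Finset.mem_erase.2 ⟨hne, mem_support_iff.2 fun h => hcoeff ?_⟩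
        rw [coeff_sub, coeff_C, if_neg (Ne.symm hne), h, sub_zero]
      have hsplit : weight ω δ = weight ω γ + weight ω (δ - γ) := by
        rw [← map_add, add_tsub_cancel_of_le hγδ]
      linarith [hε_le _ hmem]

end OperatorSpan

lemma ordW_sub_lt_weight_of_mem_support_pdPoly {n : ℕ} {ω : Fin n → ℝ}
    {g : MvPolynomial (Fin n) ℂ} {i : Fin n} {L : ℕ} (hL : ∀ δ ∈ face ω g, δ i < L)
    {γ : Fin n →₀ ℕ} (hγ : γ ∈ (pdPoly (Finsupp.single i L) g).support) :
    ordW g ω - L * ω i < weight ω γ := by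
  have hS := (mem_support_pdPoly_iff _ γ g).1 hγ
  have hne : weight ω (γ + Finsupp.single i L) ≠ ordW g ω := fun h =>
    absurd (hL _ (mem_face.2 ⟨hS, h⟩)) (by simp)
  have hlt := lt_of_le_of_ne (ordW_le_weight ω hS) (Ne.symm hne)
  rw [map_add, Finsupp.weight_single, nsmul_eq_mul] at hlt
  linarith

theorem stmt9_general (n : ℕ) (f : MvPolynomial (Fin n) ℂ) (hf : f ≠ 0) (ℓ : ℕ)
    (ω : Fin n → ℝ) (i : Fin n) (lam : ℕ)
    (hlam : lam =
      (f.support.filter (fun γ => ∑ k, (γ k : ℝ) * ω k = ordW f ω)).sup (fun γ => γ i)) :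
    ∃ (A : Finset ((Fin n →₀ ℕ) × (Fin n →₀ ℕ))) (c : (Fin n →₀ ℕ) × (Fin n →₀ ℕ) → ℂ),
      (∀ p ∈ A, (∑ k, ω k * p.2 k) - (∑ k, ω k * p.1 k) < ((ℓ * lam + 1 : ℕ) : ℝ) * ω i) ∧
      pdPoly (Pi.single i (ℓ * lam + 1)) (f ^ ℓ) +
        ∑ p ∈ A, MvPolynomial.monomial p.1 (c p) * pdPoly (⇑p.2) (f ^ ℓ) = 0 := by
  have hface : ∀ δ ∈ face ω (f ^ ℓ), δ i < ℓ * lam + 1 := fun δ hδ => by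
    rw [hlam]
    exact Nat.lt_succ_of_le (apply_le_of_mem_face_pow hf i ℓ δ hδ)
  have hT : pdPoly (Pi.single i (ℓ * lam + 1)) (f ^ ℓ) ∈
      opSpan (f ^ ℓ) {p | weight ω p.2 - weight ω p.1 < ((ℓ * lam + 1 : ℕ) : ℝ) * ω i} := by
    rw [← Finsupp.single_eq_pi_single]
    exact mem_of_forall_monomial_mem _ fun γ hγ => monomial_mem_opSpan (pow_ne_zero ℓ hf) _
      (ordW_sub_lt_weight_of_mem_support_pdPoly hface hγ) _
  obtain ⟨A, c, hA, hsum⟩ := exists_sum_eq_of_mem_opSpan (neg_mem hT)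
  refine ⟨A, c, fun p hp => ?_, by rw [hsum, add_neg_cancel]⟩
  simpa [weight_eq_sum_mul, mul_comm] using hA p hp

/-- with `λᵢ = max{γᵢ : γ in the face of `Γ(f)` determined by ω}`, there is an
operator `Q = ∂_i^{ℓλᵢ+1} + (lower (−ω,ω)-order terms)` annihilating `f^ℓ`. -/
theorem stmt9 (n : ℕ) (f : MvPolynomial (Fin n) ℂ) (hf : f ≠ 0) (ℓ : ℕ)
    (ω : Fin n → ℝ) (hω : ω ≠ 0) (i : Fin n) (lam : ℕ)
    (hlam : lam =
      (f.support.filter (fun γ => ∑ k, (γ k : ℝ) * ω k = ordW f ω)).sup (fun γ => γ i)) :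
    ∃ (A : Finset ((Fin n →₀ ℕ) × (Fin n →₀ ℕ))) (c : (Fin n →₀ ℕ) × (Fin n →₀ ℕ) → ℂ),
      (∀ p ∈ A, (∑ k, ω k * p.2 k) - (∑ k, ω k * p.1 k) < ((ℓ * lam + 1 : ℕ) : ℝ) * ω i) ∧
      pdPoly (Pi.single i (ℓ * lam + 1)) (f ^ ℓ) +
        ∑ p ∈ A, MvPolynomial.monomial p.1 (c p) * pdPoly (⇑p.2) (f ^ ℓ) = 0 :=
  stmt9_general n f hf ℓ ω i lam hlam
end

section
/- Let f ∈ ℂ[x₁,…,xₙ] be a nonzero polynomial, ω ∈ ℝⁿ, and let Q = Σ_{(α,β)} c_{αβ} x^α ∂^β be a nonzero polynomial-coefficient differential operator. Set M = 1 + max{|β| : c_{αβ} ≠ 0}. Then there exists a polynomial g ∈ ℂ[x₁,…,xₙ] such that Q • (1/f) = g/f^M on {x ∈ ℝⁿ : f(x) ≠ 0}, and such that either g = 0 or max{−⟨ω,γ⟩ : γ ∈ Supp(g)} ≤ max{⟨ω,β⟩ − ⟨ω,α⟩ : c_{αβ} ≠ 0} + (M−1)·max{−⟨ω,γ⟩ :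 γ ∈ Supp(f)}, i.e. deg_{−ω}(g) ≤ deg_{(−ω,ω)}(Q) + (M−1)·deg_{−ω}(f). -/
open MvPolynomial
open scoped Classical Pointwise

/-!
If `G = h / f ^ m` on `{f ≠ 0}`, the quotient rule gives
`∂ᵢ G = (∂ᵢ h · f - m · h · ∂ᵢ f) / f ^ (m + 1)`, and for the weight `w = -ω` each term of the new
numerator has `w`-degree at most `deg_w h + deg_w f - w i`. Starting from `1 / f` and iterating,
`∂^β (1 / f) = h_β / f ^ (1 + |β|)` with `deg_w h_β ≤ ⟨ω, β⟩ + |β| · deg_w f`. Multiplying by `x^α`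
adds `-⟨ω, α⟩`, and passing to the common denominator `f ^ M` multiplies the numerator by
`f ^ (M - 1 - |β|)`, which adds `(M - 1 - |β|) · deg_w f`.
-/

lemma Finsupp.weight_neg_eq {σ : Type*} [Fintype σ] (ω : σ → ℝ) (γ : σ →₀ ℕ) :
    Finsupp.weight (-ω) γ = -∑ i, ω i * (γ i : ℝ) := by
  simp [Finsupp.weight_eq_sum, mul_comm]

section WeightedDegree

open Finsupp

variable {σ R : Type*} [CommSemiring R] (w : σ → ℝ)

def WeightedDegreeLE (B : ℝ) (p : MvPolynomial σ R) : Prop :=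
  ∀ γ ∈ p.support, weight w γ ≤ B

namespace WeightedDegreeLE

variable {w} {B B' : ℝ} {p q : MvPolynomial σ R}

lemma mono (hp : WeightedDegreeLE w B p) (h : B ≤ B') : WeightedDegreeLE w B' p :=
  fun γ hγ => (hp γ hγ).trans h

lemma monomial (γ : σ →₀ ℕ) (a : R) : WeightedDegreeLE w (weight w γ) (monomial γ a) :=
  fun _ hδ => (congrArg (weight w) (Finset.mem_singleton.mp (support_monomial_subset hδ))).le

lemma C (a : R) : WeightedDegreeLE w 0 (C a : MvPolynomial σ R) := by
  simpa using monomial (w := w) 0 a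

lemma one : WeightedDegreeLE w 0 (1 : MvPolynomial σ R) :=
  C 1

lemma sum {ι : Type*} (s : Finset ι) {P : ι → MvPolynomial σ R}
    (hP : ∀ i ∈ s, WeightedDegreeLE w B (P i)) : WeightedDegreeLE w B (∑ i ∈ s, P i) := by
  intro γ hγ
  obtain ⟨i, hi, hγi⟩ := Finset.mem_biUnion.mp (support_sum hγ)
  exact hP i hi γ hγi

lemma mul (hp : WeightedDegreeLE w B p) (hq : WeightedDegreeLE w B' q) :
    WeightedDegreeLE w (B + B') (p * q) := by
  intro γ hγ
  obtain ⟨a, ha, b, hb, rfl⟩ := Finset.mem_add.mp (support_mul p q hγ)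
  rw [map_add]
  exact add_le_add (hp a ha) (hq b hb)

lemma pow (hp : WeightedDegreeLE w B p) : ∀ k : ℕ, WeightedDegreeLE w (k * B) (p ^ k)
  | 0 => by simpa using one
  | k + 1 => by simpa [pow_succ, add_mul] using (pow hp k).mul hp

lemma pderiv (hp : WeightedDegreeLE w B p) (i : σ) :
    WeightedDegreeLE w (B - w i) (pderiv i p) := by
  intro γ hγ
  have hγi : γ + single i 1 ∈ p.support := by
    rw [MvPolynomial.mem_support_iff, coeff_pderiv] at hγ
    exact MvPolynomial.mem_support_iff.mpr (left_ne_zero_of_mul hγ)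
  have hw := hp _ hγi
  rw [map_add, weight_single, one_smul] at hw
  linarith

end WeightedDegreeLE

lemma WeightedDegreeLE.sub {σ R : Type*} [CommRing R] {w : σ → ℝ} {B : ℝ}
    {p q : MvPolynomial σ R} (hp : WeightedDegreeLE w B p) (hq : WeightedDegreeLE w B q) :
    WeightedDegreeLE w B (p - q) := by
  intro γ hγ
  rcases Finset.mem_union.mp (support_sub σ p q hγ) with h | h
  exacts [hp γ h, hq γ h]

end WeightedDegree

section PolynomialFunctions

variable {n : ℕ}

lemma evalR_C (a : ℂ) : evalR (C a : MvPolynomial (Fin n) ℂ) = fun _ => a := by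
  funext x; simp [evalR]

lemma evalR_add (p q : MvPolynomial (Fin n) ℂ) :
    evalR (p + q) = fun x => evalR p x + evalR q x := by
  funext x; simp [evalR]

lemma evalR_mul_X (p : MvPolynomial (Fin n) ℂ) (j : Fin n) :
    evalR (p * X j) = fun x => evalR p x * (x j : ℂ) := by
  funext x; simp [evalR]

lemma evalR_monomial_equivFunOnFinite_symm (α : Fin n → ℕ) (a : ℂ) (x : Fin n → ℝ) :
    evalR (monomial (Finsupp.equivFunOnFinite.symm α) a) x = a * ∏ i, (x i : ℂ) ^ α i := by
  simp [evalR, eval_monomial, Finsupp.prod_fintype]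

lemma hasFDerivAt_coord (j : Fin n) (x : Fin n → ℝ) :
    HasFDerivAt (fun y : Fin n → ℝ => (y j : ℂ))
      (Complex.ofRealCLM.comp (ContinuousLinearMap.proj j)) x :=
  Complex.ofRealCLM.hasFDerivAt.comp x (hasFDerivAt_apply j x)

lemma differentiable_evalR (p : MvPolynomial (Fin n) ℂ) : Differentiable ℝ (evalR p) := by
  induction p using MvPolynomial.induction_on with
  | C a => rw [evalR_C]; exact differentiable_const a
  | add p q hp hq => rw [evalR_add]; exact hp.add hq
  | mul_X p j hp =>
    rw [evalR_mul_X]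
    exact hp.mul fun x => (hasFDerivAt_coord j x).differentiableAt

lemma pd_evalR (p : MvPolynomial (Fin n) ℂ) (i : Fin n) : pd i (evalR p) = evalR (pderiv i p) := by
  funext x
  induction p using MvPolynomial.induction_on with
  | C a => simp [pd, evalR_C, evalR]
  | add p q hp hq =>
    rw [pd, evalR_add,
      ((differentiable_evalR p x).hasFDerivAt.fun_add (differentiable_evalR q x).hasFDerivAt).fderiv]
    simpa [pd, evalR] using congrArg₂ (· + ·) hp hq
  | mul_X p j hp =>
    rw [pd, evalR_mul_X,
      ((differentiable_evalR p x).hasFDerivAt.fun_mul (hasFDerivAt_coord j x)).fderiv]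
    rw [pd] at hp
    rcases eq_or_ne j i with rfl | hji
    · simp [hp, evalR]
    · simp [hp, evalR, Pi.single_eq_of_ne hji, pderiv_X_of_ne hji]

lemma isOpen_setOf_evalR_ne_zero (f : MvPolynomial (Fin n) ℂ) :
    IsOpen {x : Fin n → ℝ | evalR f x ≠ 0} :=
  isOpen_ne_fun (differentiable_evalR f).continuous continuous_const

lemma pd_evalR_div {h F : MvPolynomial (Fin n) ℂ} {x : Fin n → ℝ} (hx : evalR F x ≠ 0)
    (i : Fin n) :
    pd i (fun y => evalR h y / evalR F y) x =
      (evalR (pderiv i h) x * evalR F x - evalR h x * evalR (pderiv i F) x) / evalR F x ^ 2 := by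
  have hinv : HasFDerivAt (fun y => (evalR F y)⁻¹) _ x :=
    (hasFDerivAt_inv' hx).comp x (differentiable_evalR F x).hasFDerivAt
  have hquot := (differentiable_evalR h x).hasFDerivAt.fun_mul hinv
  simp only [div_eq_mul_inv]
  rw [pd, hquot.fderiv]
  simp only [add_apply, smul_apply, smul_eq_mul, neg_apply, ContinuousLinearMap.comp_apply,
    ContinuousLinearMap.mulLeftRight_apply]
  rw [← pd, ← pd, pd_evalR, pd_evalR]
  field_simp
  ring

end PolynomialFunctions

section DenomPow

variable {n : ℕ} {f : MvPolynomial (Fin n) ℂ} {w : Fin n → ℝ} {m : ℕ} {B D : ℝ}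
  {G : (Fin n → ℝ) → ℂ}

def HasDenomPow (f : MvPolynomial (Fin n) ℂ) (w : Fin n → ℝ) (m : ℕ) (B : ℝ)
    (G : (Fin n → ℝ) → ℂ) : Prop :=
  ∃ h : MvPolynomial (Fin n) ℂ, WeightedDegreeLE w B h ∧
    ∀ x, evalR f x ≠ 0 → G x = evalR h x / evalR f x ^ m

lemma hasDenomPow_inv (f : MvPolynomial (Fin n) ℂ) (w : Fin n → ℝ) :
    HasDenomPow f w 1 0 (fun x => (evalR f x)⁻¹) :=
  ⟨1, WeightedDegreeLE.one, fun x _ => by simp [evalR]⟩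

namespace HasDenomPow

lemma mono (hG : HasDenomPow f w m B G) {B' : ℝ} (hB : B ≤ B') : HasDenomPow f w m B' G :=
  let ⟨h, hh, hG⟩ := hG
  ⟨h, hh.mono hB, hG⟩

lemma sum {ι : Type*} (s : Finset ι) {G : ι → (Fin n → ℝ) → ℂ}
    (hG : ∀ i ∈ s, HasDenomPow f w m B (G i)) :
    HasDenomPow f w m B (fun x => ∑ i ∈ s, G i x) := by
  choose! h hh hGh using hG
  refine ⟨∑ i ∈ s, h i, WeightedDegreeLE.sum s hh, fun x hx => ?_⟩
  simp only [evalR, map_sum] at hGh ⊢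
  rw [Finset.sum_div]
  exact Finset.sum_congr rfl fun i hi => hGh i hi x hx

lemma mul_evalR (hG : HasDenomPow f w m B G) {p : MvPolynomial (Fin n) ℂ} {b : ℝ}
    (hp : WeightedDegreeLE w b p) : HasDenomPow f w m (b + B) (fun x => evalR p x * G x) := by
  obtain ⟨h, hh, hGh⟩ := hG
  refine ⟨p * h, hp.mul hh, fun x hx => ?_⟩
  simp [hGh x hx, evalR, mul_div_assoc]

lemma pow_add (hf : WeightedDegreeLE w D f) (hG : HasDenomPow f w m B G) (j : ℕ) :
    HasDenomPow f w (m + j) (B + j * D) G := by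
  obtain ⟨h, hh, hGh⟩ := hG
  refine ⟨h * f ^ j, hh.mul (hf.pow j), fun x hx => ?_⟩
  rw [hGh x hx, _root_.pow_add, ← mul_div_mul_right _ _ (pow_ne_zero j hx)]
  simp [evalR]

lemma pd (hf : WeightedDegreeLE w D f) (hG : HasDenomPow f w m B G) (i : Fin n) :
    HasDenomPow f w (m + 1) (B + (D - w i)) (pd i G) := by
  obtain ⟨h, hh, hGh⟩ := hG
  have hnum₁ : WeightedDegreeLE w (B + (D - w i)) (pderiv i h * f) :=
    ((hh.pderiv i).mul hf).mono (by linarith)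
  have hnum₂ : WeightedDegreeLE w (B + (D - w i)) (C (m : ℂ) * (h * pderiv i f)) :=
    ((WeightedDegreeLE.C _).mul (hh.mul (hf.pderiv i))).mono (by linarith)
  refine ⟨pderiv i h * f - C (m : ℂ) * (h * pderiv i f), hnum₁.sub hnum₂, fun x hx => ?_⟩
  have hfm : evalR (f ^ m) x ≠ 0 := by simpa [evalR] using pow_ne_zero m hx
  have hGx : G =ᶠ[nhds x] fun y => evalR h y / evalR (f ^ m) y := by
    filter_upwards [(isOpen_setOf_evalR_ne_zero f).mem_nhds hx] with y hy
    simpa [evalR] using hGh y hy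
  have hpow : f * pderiv i (f ^ m) = C (m : ℂ) * f ^ m * pderiv i f := by
    rcases m with _ | k
    · simp
    · simp only [pderiv_pow, Nat.add_sub_cancel, map_natCast]
      ring
  have hpowx := congrArg (fun p => evalR p x) hpow
  rw [_root_.pd, hGx.fderiv_eq, ← _root_.pd, pd_evalR_div hfm]
  simp only [evalR, map_mul, map_sub, map_pow, eval_C] at hpowx hfm hx ⊢
  set e := eval fun j => (x j : ℂ)
  field_simp
  linear_combination -(e h * e f ^ m) * hpowx

lemma iterate_pd (hf : WeightedDegreeLE w D f) (hG : HasDenomPow f w m B G) (i : Fin n) :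
    ∀ j : ℕ, HasDenomPow f w (m + j) (B + j * (D - w i)) ((_root_.pd i)^[j] G)
  | 0 => by simpa using hG
  | j + 1 => by
    rw [Function.iterate_succ_apply']
    convert (hG.iterate_pd hf i j).pd hf i using 1 <;> push_cast <;> ring

lemma pdIter (hf : WeightedDegreeLE w D f) (hG : HasDenomPow f w m B G) (β : Fin n → ℕ) :
    HasDenomPow f w (m + ∑ i, β i) (B + ∑ i, β i * (D - w i)) (_root_.pdIter β G) := by
  have hfold : ∀ l : List (Fin n), HasDenomPow f w (m + (l.map β).sum)
      (B + (l.map fun i => β i * (D - w i)).sum)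
      ((l.map fun i => (_root_.pd i)^[β i]).foldr (· ∘ ·) id G) := by
    intro l
    induction l with
    | nil => simpa using hG
    | cons i l ih =>
      simp only [List.map_cons, List.sum_cons, List.foldr_cons, Function.comp_apply]
      convert ih.iterate_pd hf i (β i) using 1 <;> ring
  simpa only [_root_.pdIter, List.ofFn_eq_map, Fin.sum_univ_def, List.map_map] using
    hfold (List.finRange n)

end HasDenomPow

lemma hasDenomPow_monomial_mul_pdIter_inv (hf : WeightedDegreeLE w D f) (a : ℂ)
    (α β : Fin n → ℕ) {K : ℕ} (hK : ∑ i, β i ≤ K) :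
    HasDenomPow f w (1 + K) (∑ i, ((α i : ℝ) - β i) * w i + K * D)
      (fun x => a * (∏ i, (x i : ℂ) ^ α i) * pdIter β (fun y => (evalR f y)⁻¹) x) := by
  have h := (((hasDenomPow_inv f w).pdIter hf β).pow_add hf (K - ∑ i, β i)).mul_evalR
    (WeightedDegreeLE.monomial (Finsupp.equivFunOnFinite.symm α) a)
  rw [show 1 + ∑ i, β i + (K - ∑ i, β i) = 1 + K by omega] at h
  simp only [evalR_monomial_equivFunOnFinite_symm] at h
  refine h.mono (le_of_eq ?_)
  rw [Finsupp.weight_eq_sum, Nat.cast_sub hK]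
  simp only [Finsupp.coe_equivFunOnFinite_symm, nsmul_eq_mul, Nat.cast_sum, mul_sub, sub_mul,
    Finset.sum_sub_distrib, ← Finset.sum_mul]
  ring

end DenomPow

theorem stmt12_general (n : ℕ) (f : MvPolynomial (Fin n) ℂ) (hf : f ≠ 0) (ω : Fin n → ℝ)
    (A : Finset ((Fin n → ℕ) × (Fin n → ℕ))) (hA : A.Nonempty)
    (c : (Fin n → ℕ) × (Fin n → ℕ) → ℂ) :
    ∃ g : MvPolynomial (Fin n) ℂ,
      (∀ x : Fin n → ℝ, evalR f x ≠ 0 →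
        ∑ p ∈ A, c p * (∏ i, (x i : ℂ) ^ p.1 i) * pdIter p.2 (fun y => (evalR f y)⁻¹) x
          = evalR g x / (evalR f x) ^ (1 + A.sup (fun p => ∑ i, p.2 i))) ∧
      ∀ γ ∈ g.support,
        -(∑ i, ω i * (γ i : ℝ)) ≤
          A.sup' hA (fun p => (∑ i, ω i * p.2 i) - (∑ i, ω i * p.1 i)) +
            ((A.sup (fun p => ∑ i, p.2 i) : ℕ) : ℝ) *
              (f.support.sup' (MvPolynomial.support_nonempty.mpr hf)
                (fun δ => -(∑ i, ω i * (δ i : ℝ)))) := by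
  set D := f.support.sup' (MvPolynomial.support_nonempty.mpr hf) fun δ => -∑ i, ω i * (δ i : ℝ)
  set K := A.sup fun p => ∑ i, p.2 i
  have hfD : WeightedDegreeLE (-ω) D f := fun δ hδ => by
    rw [Finsupp.weight_neg_eq]
    exact Finset.le_sup' (fun δ : Fin n →₀ ℕ => -∑ i, ω i * (δ i : ℝ)) hδ
  have hterm : ∀ p ∈ A, HasDenomPow f (-ω) (1 + K)
      (A.sup' hA (fun p => (∑ i, ω i * p.2 i) - (∑ i, ω i * p.1 i)) + K * D)
      (fun x => c p * (∏ i, (x i : ℂ) ^ p.1 i) * pdIter p.2 (fun y => (evalR f y)⁻¹) x) := by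
    intro p hp
    refine (hasDenomPow_monomial_mul_pdIter_inv hfD (c p) p.1 p.2
      (Finset.le_sup (f := fun p => ∑ i, p.2 i) hp)).mono (add_le_add_left ?_ _)
    refine le_of_eq_of_le ?_ (Finset.le_sup'
      (fun p : (Fin n → ℕ) × (Fin n → ℕ) => (∑ i, ω i * p.2 i) - (∑ i, ω i * p.1 i)) hp)
    simp only [Pi.neg_apply, mul_neg, sub_mul, Finset.sum_neg_distrib, Finset.sum_sub_distrib,
      mul_comm (ω _)]
    ring
  obtain ⟨g, hg, hgG⟩ := HasDenomPow.sum A hterm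
  exact ⟨g, hgG, fun γ hγ => Finsupp.weight_neg_eq ω γ ▸ hg γ hγ⟩

/-- `Q • (1/f) = g / f^M` on `{f ≠ 0}` with `M = 1 + max |β|`, and
`deg_{−ω}(g) ≤ deg_{(−ω,ω)}(Q) + (M−1)·deg_{−ω}(f)` (the degree bound being expressed
as a bound on every exponent in the support of `g`). -/
theorem stmt12 (n : ℕ) (f : MvPolynomial (Fin n) ℂ) (hf : f ≠ 0) (ω : Fin n → ℝ)
    (A : Finset ((Fin n → ℕ) × (Fin n → ℕ))) (hA : A.Nonempty)
    (c : (Fin n → ℕ) × (Fin n → ℕ) → ℂ) (hc : ∀ p ∈ A, c p ≠ 0) :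
    ∃ g : MvPolynomial (Fin n) ℂ,
      (∀ x : Fin n → ℝ, evalR f x ≠ 0 →
        ∑ p ∈ A, c p * (∏ i, (x i : ℂ) ^ p.1 i) * pdIter p.2 (fun y => (evalR f y)⁻¹) x
          = evalR g x / (evalR f x) ^ (1 + A.sup (fun p => ∑ i, p.2 i))) ∧
      ∀ γ ∈ g.support,
        -(∑ i, ω i * (γ i : ℝ)) ≤
          A.sup' hA (fun p => (∑ i, ω i * p.2 i) - (∑ i, ω i * p.1 i)) +
            ((A.sup (fun p => ∑ i, p.2 i) : ℕ) : ℝ) *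
              (f.support.sup' (MvPolynomial.support_nonempty.mpr hf)
                (fun δ => -(∑ i, ω i * (δ i : ℝ)))) :=
  stmt12_general n f hf ω A hA c
end
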